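/- Let β = (β₁,...,βₙ) with 1 > |β₁| ≥ ... ≥ |βₙ| > 0 and let r = max{|p| : ∃j, βⱼ = β^p} be the maximal resonance length. Then every β sub-resonant polynomial transformation P ∈ G^r_β is a polynomial map of degree at most r, and for every k ≥ r the k-jet at 0 map G^r_β → 𝒟^k(ℂⁿ) is an injective group homomorphism (so G^k_β = G^r_β for k ≥ r). -/

import Mathlib

open Finset

noncomputable section

/-- `bpow β p = ∏ᵢ βᵢ ^ pᵢ`. -/
def bpow {n : ℕ} (β : Fin n → ℂ) (p : Fin n → ℕ) : ℂ := ∏ i, β i ^ p i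

/-- `𝒫ⱼ`: the set of resonances of `βⱼ`, i.e. `p ∈ ℕⁿ` with `βⱼ = β^p` and
`p ≠ eₖ` for all `k ≥ j`. -/
def resSet {n : ℕ} (β : Fin n → ℂ) (j : Fin n) : Set (Fin n → ℕ) :=
  {p | β j = bpow β p ∧ ∀ k : Fin n, j ≤ k → p ≠ fun i => if i = k then 1 else 0}

/-- `𝒬ⱼ`: the set of nonzero multi-indices componentwise bounded by some
resonance of `βⱼ`. -/
def subResSet {n : ℕ} (β : Fin n → ℂ) (j : Fin n) : Set (Fin n → ℕ) :=
  {q | q ≠ 0 ∧ ∃ p ∈ resSet β j, ∀ l, q l ≤ p l}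

/-- A map `P : ℂⁿ → ℂⁿ` is β sub-resonant if
`P(z) = (a₁z₁, a₂z₂ + P₂(z₁), ..., aₙzₙ + Pₙ(z₁,...,z_{n-1}))` with all `aⱼ ≠ 0`
and each `Pⱼ` a linear combination of monomials `z^q` with `q ∈ 𝒬ⱼ` depending
only on the variables `z₁, ..., z_{j-1}`. -/
def IsSubResonant {n : ℕ} (β : Fin n → ℂ) (P : (Fin n → ℂ) → (Fin n → ℂ)) : Prop :=
  ∃ (a : Fin n → ℂ) (c : Fin n → ((Fin n → ℕ) →₀ ℂ)),
    (∀ j, a j ≠ 0) ∧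
    (∀ j q, c j q ≠ 0 → q ∈ subResSet β j ∧ ∀ i, j ≤ i → q i = 0) ∧
    ∀ (z : Fin n → ℂ) (j : Fin n),
      P z j = a j * z j + (c j).sum fun q coef => coef * ∏ i, z i ^ q i

/-!
Call an exponent `d` dominated by `x ∈ ℂ` if `d ≤ p` for some `p` with `β ^ p = x`. For exponents
in the variables `z₁, …, z_{j-1}`, membership in `𝒬ⱼ` just means being nonzero and dominated by
`βⱼ`. Domination is additive (`β ^ (p + p') = β ^ p * β ^ p'`) and transitive, so substituting
the components of a sub-resonant `Q` into a sub-resonant monomial of `P` produces only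
sub-resonant monomials: `G^r_β` is closed under composition.

Every `q ∈ 𝒬ⱼ` lies below a nonzero resonance, so `|q| ≤ r` and a sub-resonant map is a polynomial
map of degree `≤ r ≤ k`. On a line `t ↦ t • z` it becomes a one-variable polynomial of degree
`≤ k` whose Taylor coefficients at `0` are values of the `k`-jet, so the `k`-jet determines it.
-/

open MvPolynomial
open scoped Pointwise

section Support

variable {σ R : Type*} [CommSemiring R] {f : MvPolynomial σ R} {s : Set (σ →₀ ℕ)}

theorem constantCoeff_eq_zero_of_mem_restrictSupport (hf : f ∈ restrictSupport R s) (hs : 0 ∉ s) :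
    constantCoeff f = 0 := by
  by_contra h
  exact hs (hf (mem_support_iff.2 (by rwa [constantCoeff_eq] at h)))

theorem notMem_vars_of_mem_restrictSupport {i : σ} (hf : f ∈ restrictSupport R s)
    (hs : ∀ d ∈ s, d i = 0) : i ∉ f.vars := by
  classical
  rw [mem_vars_iff_mem_support]
  rintro ⟨d, hd, hid⟩
  exact Finsupp.mem_support_iff.1 hid (hs d (hf hd))

theorem constantCoeff_bind₁ {τ : Type*} {g : σ → MvPolynomial τ R}
    (hg : ∀ i, constantCoeff (g i) = 0) (f : MvPolynomial σ R) :
    constantCoeff (bind₁ g f) = constantCoeff f := by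
  rw [← eval_zero, ← eval_zero]
  simpa [hg] using eval₂Hom_bind₁ (RingHom.id R) 0 g f

end Support

section Encoding

variable {σ R : Type*} [Fintype σ] [CommSemiring R]

/-- `IsSubResonant` indexes coefficients by exponent vectors `σ → ℕ` instead of `σ →₀ ℕ`. -/
def coeffEquivFun : MvPolynomial σ R ≃ ((σ → ℕ) →₀ R) :=
  AddMonoidAlgebra.coeffEquiv.trans (Finsupp.domCongr Finsupp.equivFunOnFinite).toEquiv

theorem coeffEquivFun_apply (f : MvPolynomial σ R) (q : σ → ℕ) :
    coeffEquivFun f q = f.coeff (Finsupp.equivFunOnFinite.symm q) :=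
  rfl

theorem eval_eq_sum_coeffEquivFun (z : σ → R) (f : MvPolynomial σ R) :
    eval z f = (coeffEquivFun f).sum fun q a => a * ∏ i, z i ^ q i := by
  rw [eval_eq', coeffEquivFun, Equiv.trans_apply, AddEquiv.toEquiv_eq_coe, AddEquiv.coe_toEquiv,
    Finsupp.domCongr_apply, Finsupp.sum_equivMapDomain]
  rfl

end Encoding

section Jets

variable {𝕜 : Type*} [NontriviallyNormedField 𝕜]

theorem Polynomial.iteratedDeriv_eval (p : Polynomial 𝕜) (m : ℕ) :
    iteratedDeriv m (fun t => p.eval t) = fun t => (Polynomial.derivative^[m] p).eval t := by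
  induction m generalizing p with
  | zero => simp
  | succ m ih =>
    have hderiv : deriv (fun t => p.eval t) = fun t => (Polynomial.derivative p).eval t := by
      ext; exact Polynomial.deriv p
    rw [iteratedDeriv_succ', hderiv, ih, Function.iterate_succ_apply]

theorem Polynomial.eq_of_iteratedDeriv_eval_zero_eq [CharZero 𝕜] {p q : Polynomial 𝕜} {k : ℕ}
    (hp : p.natDegree ≤ k) (hq : q.natDegree ≤ k)
    (h : ∀ m ≤ k, iteratedDeriv m (fun t => p.eval t) 0 = iteratedDeriv m (fun t => q.eval t) 0) :
    p = q := by
  ext m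
  rcases le_or_gt m k with hm | hm
  · have hcoeff := h m hm
    simp only [Polynomial.iteratedDeriv_eval, ← Polynomial.coeff_zero_eq_eval_zero,
      Polynomial.coeff_iterate_derivative, zero_add, Nat.descFactorial_self, nsmul_eq_mul] at hcoeff
    exact mul_left_cancel₀ (by exact_mod_cast m.factorial_ne_zero) hcoeff
  · rw [Polynomial.coeff_eq_zero_of_natDegree_lt (hp.trans_lt hm),
      Polynomial.coeff_eq_zero_of_natDegree_lt (hq.trans_lt hm)]

theorem MvPolynomial.exists_eval_smul_eq {σ : Type*} [Fintype σ] (F : MvPolynomial σ 𝕜)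
    (z : σ → 𝕜) :
    ∃ p : Polynomial 𝕜, p.natDegree ≤ F.totalDegree ∧ ∀ t : 𝕜, eval (t • z) F = p.eval t := by
  refine ⟨∑ d ∈ F.support,
    Polynomial.C (F.coeff d * ∏ i, z i ^ d i) * Polynomial.X ^ d.degree, ?_, fun t => ?_⟩
  · refine Polynomial.natDegree_sum_le_of_forall_le _ _ fun d hd => ?_
    exact (Polynomial.natDegree_C_mul_X_pow_le _ _).trans (le_totalDegree hd)
  · simp only [eval_eq', Polynomial.eval_finsetSum, Polynomial.eval_C_mul, Polynomial.eval_X_pow,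
      Pi.smul_apply, smul_eq_mul, mul_pow, prod_mul_distrib, prod_pow_eq_pow_sum,
      Finsupp.degree_eq_sum]
    exact sum_congr rfl fun d _ => by ring

theorem iteratedDeriv_apply_smul_eq_iteratedFDeriv {ι E : Type*} [Fintype ι]
    [NormedAddCommGroup E] [NormedSpace 𝕜 E] {R : E → ι → 𝕜} {m : ℕ} (hR : ContDiff 𝕜 m R)
    (z : E) (j : ι) :
    iteratedDeriv m (fun t : 𝕜 => R (t • z) j) 0 = iteratedFDeriv 𝕜 m R 0 (fun _ => z) j := by
  set L := ContinuousLinearMap.toSpanSingleton 𝕜 z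
  set π := ContinuousLinearMap.proj (R := 𝕜) (φ := fun _ : ι => 𝕜) j
  have hline : (fun t : 𝕜 => R (t • z) j) = π ∘ R ∘ L := rfl
  rw [iteratedDeriv_eq_iteratedFDeriv, hline,
    ContinuousLinearMap.iteratedFDeriv_comp_left π (hR.comp L.contDiff).contDiffAt le_rfl,
    ContinuousLinearMap.iteratedFDeriv_comp_right L hR 0 le_rfl, map_zero]
  simp [L, π]

theorem MvPolynomial.eval_eq_of_iteratedFDeriv_zero_eq [CompleteSpace 𝕜] [CharZero 𝕜]
    {σ ι : Type*} [Fintype σ] [Fintype ι] {F G : ι → MvPolynomial σ 𝕜} {k : ℕ}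
    (hF : ∀ j, (F j).totalDegree ≤ k) (hG : ∀ j, (G j).totalDegree ≤ k)
    (h : ∀ m ≤ k, iteratedFDeriv 𝕜 m (fun z j => eval z (F j)) 0 =
      iteratedFDeriv 𝕜 m (fun z j => eval z (G j)) 0) :
    (fun z j => eval z (F j)) = fun z j => eval z (G j) := by
  have hsmooth (H : ι → MvPolynomial σ 𝕜) (m : ℕ) : ContDiff 𝕜 m fun z j => eval z (H j) :=
    contDiff_pi.2 fun j => (AnalyticOnNhd.eval_mvPolynomial (H j)).contDiff
  funext z j
  obtain ⟨p, hp, hpF⟩ := (F j).exists_eval_smul_eq z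
  obtain ⟨q, hq, hqG⟩ := (G j).exists_eval_smul_eq z
  have hpq : p = q := by
    refine Polynomial.eq_of_iteratedDeriv_eval_zero_eq (hp.trans (hF j)) (hq.trans (hG j))
      fun m hm => ?_
    simp only [← hpF, ← hqG]
    rw [iteratedDeriv_apply_smul_eq_iteratedFDeriv (hsmooth F m),
      iteratedDeriv_apply_smul_eq_iteratedFDeriv (hsmooth G m), h m hm]
  have hone := hpF 1
  rwa [hpq, ← hqG, one_smul] at hone

end Jets

section Dominated

variable {n : ℕ} {R : Type*} [CommSemiring R] (β : Fin n → ℂ)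

theorem bpow_add (p q : Fin n → ℕ) : bpow β (p + q) = bpow β p * bpow β q := by
  simp only [bpow, Pi.add_apply, pow_add, prod_mul_distrib]

theorem bpow_zero : bpow β 0 = 1 := by simp [bpow]

theorem bpow_single (i : Fin n) : bpow β ⇑(Finsupp.single i 1) = β i := by
  simp [bpow, Finsupp.single_apply]

def dominatedMonomials (x : ℂ) : Set (Fin n →₀ ℕ) := {d | ∃ p, ⇑d ≤ p ∧ bpow β p = x}

theorem dominatedMonomials_add_subset (x y : ℂ) :
    dominatedMonomials β x + dominatedMonomials β y ⊆ dominatedMonomials β (x * y) := by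
  rintro _ ⟨d, ⟨p, hdp, rfl⟩, e, ⟨q, heq, rfl⟩, rfl⟩
  exact ⟨p + q, by simpa using add_le_add hdp heq, bpow_add β p q⟩

theorem dominatedMonomials_bpow_subset {d : Fin n →₀ ℕ} {x : ℂ}
    (hd : d ∈ dominatedMonomials β x) :
    dominatedMonomials β (bpow β d) ⊆ dominatedMonomials β x := by
  obtain ⟨p, hdp, rfl⟩ := hd
  rintro e ⟨q, heq, hq⟩
  refine ⟨q + (p - d), le_add_right heq, ?_⟩
  rw [bpow_add, hq, ← bpow_add, add_tsub_cancel_of_le hdp]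

/-- Pairing a polynomial with its weight makes domination a submonoid condition, so that
`prod_mem` bounds products `∏ gᵢ ^ dᵢ`. -/
def dominatedSubmonoid : Submonoid (MvPolynomial (Fin n) R × ℂ) where
  carrier := {fx | fx.1 ∈ restrictSupport R (dominatedMonomials β fx.2)}
  mul_mem' {f g} hf hg := by
    refine restrictSupport_mono R (dominatedMonomials_add_subset β f.2 g.2) ?_
    rw [restrictSupport_add]
    exact Submodule.mul_mem_mul hf hg
  one_mem' := (monomial_mem_restrictSupport R).2 (Or.inl ⟨0, le_rfl, bpow_zero β⟩)

theorem mem_dominatedSubmonoid {fx : MvPolynomial (Fin n) R × ℂ} :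
    fx ∈ dominatedSubmonoid β ↔ fx.1 ∈ restrictSupport R (dominatedMonomials β fx.2) :=
  Iff.rfl

theorem bind₁_mem_restrictSupport_dominatedMonomials {g : Fin n → MvPolynomial (Fin n) R}
    (hg : ∀ i, g i ∈ restrictSupport R (dominatedMonomials β (β i)))
    {f : MvPolynomial (Fin n) R} {x : ℂ} (hf : f ∈ restrictSupport R (dominatedMonomials β x)) :
    bind₁ g f ∈ restrictSupport R (dominatedMonomials β x) := by
  classical
  rw [f.as_sum, map_sum]
  refine Submodule.sum_mem _ fun d hd => ?_
  have hprod : ∏ i ∈ d.support, (g i, β i) ^ d i ∈ dominatedSubmonoid β :=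
    prod_mem fun i _ => pow_mem (show (g i, β i) ∈ dominatedSubmonoid β from hg i) _
  have hbpow : ∏ i ∈ d.support, β i ^ d i = bpow β d :=
    Finsupp.prod_fintype d (fun i k => β i ^ k) fun i => pow_zero _
  rw [bind₁_monomial, C_mul']
  refine Submodule.smul_mem _ _
    (restrictSupport_mono R (dominatedMonomials_bpow_subset β (hf hd)) ?_)
  rw [mem_dominatedSubmonoid, Prod.fst_prod, Prod.snd_prod] at hprod
  simpa only [Prod.pow_fst, Prod.pow_snd, hbpow] using hprod

end Dominated

section SubResonant

variable {n : ℕ} (β : Fin n → ℂ)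

def subResonantMonomials (j : Fin n) : Set (Fin n →₀ ℕ) :=
  {d | ⇑d ∈ subResSet β j ∧ ∀ i, j ≤ i → d i = 0}

/-- The exclusion `p ≠ eₖ` (`k ≥ j`) in `resSet` is automatic here: `d ≤ eₖ` and `d k = 0`
force `d = 0`. -/
theorem mem_subResonantMonomials_iff {j : Fin n} {d : Fin n →₀ ℕ} :
    d ∈ subResonantMonomials β j ↔
      d ≠ 0 ∧ d ∈ dominatedMonomials β (β j) ∧ ∀ i, j ≤ i → d i = 0 := by
  constructor
  · rintro ⟨⟨hd0, p, ⟨hp, -⟩, hdp⟩, hdj⟩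
    exact ⟨by simpa using hd0, ⟨p, hdp, hp.symm⟩, hdj⟩
  · rintro ⟨hd0, ⟨p, hdp, hp⟩, hdj⟩
    refine ⟨⟨by simpa using hd0, p, ⟨hp.symm, fun k hk hpk => hd0 ?_⟩, hdp⟩, hdj⟩
    ext i
    have hi : d i ≤ if i = k then 1 else 0 := by simpa [hpk] using hdp i
    split_ifs at hi with hik
    · exact hik ▸ hdj k hk
    · exact Nat.le_zero.1 hi

theorem insert_single_subResonantMonomials_subset (i : Fin n) :
    insert (Finsupp.single i 1) (subResonantMonomials β i) ⊆
      {d | d ≠ 0 ∧ d ∈ dominatedMonomials β (β i) ∧ ∀ l, i < l → d l = 0} := by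
  rintro d (rfl | hd)
  · refine ⟨by simp, ⟨_, le_rfl, bpow_single β i⟩, fun l hl => ?_⟩
    simp [hl.ne]
  · obtain ⟨hd0, hdom, hdi⟩ := (mem_subResonantMonomials_iff β).1 hd
    exact ⟨hd0, hdom, fun l hl => hdi l hl.le⟩

theorem bind₁_mem_restrictSupport_subResonantMonomials {j : Fin n}
    {g : Fin n → MvPolynomial (Fin n) ℂ}
    (hg : ∀ i, g i ∈ restrictSupport ℂ (insert (Finsupp.single i 1) (subResonantMonomials β i)))
    {f : MvPolynomial (Fin n) ℂ} (hf : f ∈ restrictSupport ℂ (subResonantMonomials β j)) :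
    bind₁ g f ∈ restrictSupport ℂ (subResonantMonomials β j) := by
  have hg' i := restrictSupport_mono ℂ (insert_single_subResonantMonomials_subset β i) (hg i)
  have hf' := restrictSupport_mono ℂ (fun d hd => (mem_subResonantMonomials_iff β).1 hd) hf
  have hf0 : constantCoeff f = 0 :=
    constantCoeff_eq_zero_of_mem_restrictSupport hf' fun h => h.1 rfl
  have hvars : ∀ l ∈ f.vars, l < j := fun l hl => not_le.1 fun hjl =>
    notMem_vars_of_mem_restrictSupport hf' (fun d hd => hd.2.2 l hjl) hl
  rw [mem_restrictSupport_iff]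
  intro d hd
  rw [Finset.mem_coe] at hd
  refine (mem_subResonantMonomials_iff β).2 ⟨?_, ?_, fun i hji => ?_⟩
  · rintro rfl
    refine mem_support_iff.1 hd ?_
    rw [← constantCoeff_eq, constantCoeff_bind₁ _ f, hf0]
    exact fun i => constantCoeff_eq_zero_of_mem_restrictSupport (hg' i) fun h => h.1 rfl
  · exact bind₁_mem_restrictSupport_dominatedMonomials β
      (fun i => restrictSupport_mono ℂ (fun d hd => hd.2.1) (hg' i))
      (restrictSupport_mono ℂ (fun d hd => hd.2.1) hf') hd
  · by_contra hdi
    obtain ⟨l, hl, hil⟩ := mem_vars_bind₁ g f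
      ((mem_vars_iff_mem_support i).2 ⟨d, hd, Finsupp.mem_support_iff.2 hdi⟩)
    exact notMem_vars_of_mem_restrictSupport (hg' l)
      (fun e he => he.2.2 i ((hvars l hl).trans_le hji)) hil

end SubResonant

section Composition

variable {n : ℕ} {β : Fin n → ℂ}

theorem isSubResonant_iff {P : (Fin n → ℂ) → (Fin n → ℂ)} :
    IsSubResonant β P ↔ ∃ (a : Fin n → ℂ) (f : Fin n → MvPolynomial (Fin n) ℂ),
      (∀ j, a j ≠ 0) ∧ (∀ j, f j ∈ restrictSupport ℂ (subResonantMonomials β j)) ∧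
      ∀ z j, P z j = a j * z j + eval z (f j) := by
  constructor
  · rintro ⟨a, c, ha, hc, hP⟩
    refine ⟨a, fun j => coeffEquivFun.symm (c j), ha, fun j d hd => ?_, fun z j => ?_⟩
    · have hcd : coeffEquivFun (coeffEquivFun.symm (c j)) d = c j d := by
        rw [Equiv.apply_symm_apply]
      rw [coeffEquivFun_apply, Finsupp.equivFunOnFinite_symm_coe] at hcd
      exact hc j d (hcd ▸ mem_support_iff.1 hd)
    · rw [hP, eval_eq_sum_coeffEquivFun, Equiv.apply_symm_apply]
  · rintro ⟨a, f, ha, hf, hP⟩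
    refine ⟨a, fun j => coeffEquivFun (f j), ha, fun j q hq => ?_, fun z j => ?_⟩
    · exact hf j (mem_support_iff.2 hq)
    · rw [hP, eval_eq_sum_coeffEquivFun]

theorem IsSubResonant.comp {P Q : (Fin n → ℂ) → (Fin n → ℂ)} (hP : IsSubResonant β P)
    (hQ : IsSubResonant β Q) : IsSubResonant β (P ∘ Q) := by
  obtain ⟨a, f, ha, hf, hP⟩ := isSubResonant_iff.1 hP
  obtain ⟨b, h, hb, hh, hQ⟩ := isSubResonant_iff.1 hQ
  set g : Fin n → MvPolynomial (Fin n) ℂ := fun i => C (b i) * X i + h i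
  have hg i : g i ∈ restrictSupport ℂ (insert (Finsupp.single i 1) (subResonantMonomials β i)) :=
    add_mem (C_mul_X_eq_monomial (R := ℂ) ▸
        (monomial_mem_restrictSupport ℂ).2 (Or.inl (Set.mem_insert _ _)))
      (restrictSupport_mono ℂ (Set.subset_insert _ _) (hh i))
  have hQg : ∀ z, Q z = fun i => eval z (g i) := fun z => funext fun i => by simp [g, hQ]
  refine isSubResonant_iff.2 ⟨a * b, fun j => C (a j) * h j + bind₁ g (f j),
    fun j => mul_ne_zero (ha j) (hb j), fun j => ?_, fun z j => ?_⟩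
  · show C (a j) * h j + _ ∈ _
    rw [C_mul']
    exact add_mem (Submodule.smul_mem _ _ (hh j))
      (bind₁_mem_restrictSupport_subResonantMonomials β hg (hf j))
  · have hbind : eval z (bind₁ g (f j)) = eval (fun i => eval z (g i)) (f j) :=
      eval₂Hom_bind₁ (RingHom.id ℂ) z g (f j)
    simp only [Function.comp_apply, hP, hQg, hbind, g, map_add, map_mul, eval_C, eval_X,
      Pi.mul_apply]
    ring

end Composition

section Degree

variable {n : ℕ} {β : Fin n → ℂ} {r : ℕ}

theorem sum_le_of_mem_subResSet
    (hr : ∀ (j : Fin n) (p : Fin n → ℕ), p ≠ 0 → β j = bpow β p → ∑ i, p i ≤ r)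
    {j : Fin n} {q : Fin n → ℕ} (hq : q ∈ subResSet β j) : ∑ i, q i ≤ r := by
  obtain ⟨hq0, p, ⟨hp, -⟩, hqp⟩ := hq
  have hp0 : p ≠ 0 := by
    rintro rfl
    exact hq0 (le_antisymm hqp bot_le)
  exact (sum_le_sum fun i _ => hqp i).trans (hr j p hp0 hp)

theorem IsSubResonant.exists_totalDegree_le
    (hr : ∀ (j : Fin n) (p : Fin n → ℕ), p ≠ 0 → β j = bpow β p → ∑ i, p i ≤ r)
    {P : (Fin n → ℂ) → (Fin n → ℂ)} (hP : IsSubResonant β P) :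
    ∃ F : Fin n → MvPolynomial (Fin n) ℂ,
      (∀ j, (F j).totalDegree ≤ r) ∧ P = fun z j => eval z (F j) := by
  obtain ⟨a, f, -, hf, hP⟩ := isSubResonant_iff.1 hP
  refine ⟨fun j => C (a j) * X j + f j, fun j => ?_, funext fun z => funext fun j => by simp [hP]⟩
  have h1r : 1 ≤ r := by
    simpa using hr j (Finsupp.single j 1) (by simp) (bpow_single β j).symm
  refine (totalDegree_add _ _).trans (max_le ?_ (Finset.sup_le fun d hd => ?_))
  · rw [C_mul_X_eq_monomial]
    exact (totalDegree_monomial_le _ _).trans (by simpa using h1r)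
  · rw [Finsupp.sum_fintype _ _ fun _ => rfl]
    exact sum_le_of_mem_subResSet hr (hf j hd).1

end Degree

theorem subresonant_degree_bound_and_jet_injective_general {n : ℕ} (β : Fin n → ℂ)
    (r : ℕ)
    (hr : ∀ (j : Fin n) (p : Fin n → ℕ), p ≠ 0 → β j = bpow β p → ∑ i, p i ≤ r) :
    (∀ P : (Fin n → ℂ) → (Fin n → ℂ), IsSubResonant β P →
      ∃ (a : Fin n → ℂ) (c : Fin n → ((Fin n → ℕ) →₀ ℂ)),
        (∀ j, a j ≠ 0) ∧
        (∀ j q, c j q ≠ 0 →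
          q ∈ subResSet β j ∧ (∀ i, j ≤ i → q i = 0) ∧ ∑ i, q i ≤ r) ∧
        ∀ (z : Fin n → ℂ) (j : Fin n),
          P z j = a j * z j + (c j).sum fun q coef => coef * ∏ i, z i ^ q i) ∧
    (∀ P Q : (Fin n → ℂ) → (Fin n → ℂ), IsSubResonant β P → IsSubResonant β Q →
      IsSubResonant β (P ∘ Q)) ∧
    (∀ k : ℕ, r ≤ k →
      ∀ P Q : (Fin n → ℂ) → (Fin n → ℂ), IsSubResonant β P → IsSubResonant β Q →
        (∀ m : ℕ, m ≤ k → iteratedFDeriv ℂ m P 0 = iteratedFDeriv ℂ m Q 0) →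
        P = Q) := by
  refine ⟨fun P ⟨a, c, ha, hc, hP⟩ => ⟨a, c, ha, fun j q hq => ?_, hP⟩,
    fun P Q hP hQ => hP.comp hQ, fun k hk P Q hP hQ hjet => ?_⟩
  · obtain ⟨hsub, hlow⟩ := hc j q hq
    exact ⟨hsub, hlow, sum_le_of_mem_subResSet hr hsub⟩
  · obtain ⟨F, hF, rfl⟩ := hP.exists_totalDegree_le hr
    obtain ⟨G, hG, rfl⟩ := hQ.exists_totalDegree_le hr
    exact eval_eq_of_iteratedFDeriv_zero_eq (fun j => (hF j).trans hk) (fun j => (hG j).trans hk)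
      hjet

/-- if `r` bounds the lengths of all resonances of `β`, then every
β sub-resonant polynomial transformation is a polynomial map of degree at most
`r` (all its monomials `z^q` satisfy `|q| ≤ r`), and for every `k ≥ r` the
`k`-jet at `0` determines the map: two sub-resonant maps with the same
derivatives at `0` up to order `k` are equal (so the `k`-jet map
`G^r_β → 𝒟^k(ℂⁿ)` is an injective group homomorphism, composition being
preserved). -/
theorem subresonant_degree_bound_and_jet_injective {n : ℕ} (β : Fin n → ℂ)
    (h1 : ∀ i, ‖β i‖ < 1)
    (hpos : ∀ i, 0 < ‖β i‖)
    (hmono : ∀ i j : Fin n, i ≤ j → ‖β j‖ ≤ ‖β i‖)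
    (r : ℕ)
    (hr : ∀ (j : Fin n) (p : Fin n → ℕ), p ≠ 0 → β j = bpow β p → ∑ i, p i ≤ r) :
    (∀ P : (Fin n → ℂ) → (Fin n → ℂ), IsSubResonant β P →
      ∃ (a : Fin n → ℂ) (c : Fin n → ((Fin n → ℕ) →₀ ℂ)),
        (∀ j, a j ≠ 0) ∧
        (∀ j q, c j q ≠ 0 →
          q ∈ subResSet β j ∧ (∀ i, j ≤ i → q i = 0) ∧ ∑ i, q i ≤ r) ∧
        ∀ (z : Fin n → ℂ) (j : Fin n),
          P z j = a j * z j + (c j).sum fun q coef => coef * ∏ i, z i ^ q i) ∧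
    (∀ P Q : (Fin n → ℂ) → (Fin n → ℂ), IsSubResonant β P → IsSubResonant β Q →
      IsSubResonant β (P ∘ Q)) ∧
    (∀ k : ℕ, r ≤ k →
      ∀ P Q : (Fin n → ℂ) → (Fin n → ℂ), IsSubResonant β P → IsSubResonant β Q →
        (∀ m : ℕ, m ≤ k → iteratedFDeriv ℂ m P 0 = iteratedFDeriv ℂ m Q 0) →
        P = Q) :=
  subresonant_degree_bound_and_jet_injective_general β r hr
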